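/- For all integers n ≥ 1 and a, b ≥ 0, H*_n({2}^b, 3, {2}^a, 1) = 2·∑_{k=1}^{n} C(n,k)/(k^{2(a+b)+4}·C(n+k,k)) + 4·∑_{k=1}^{n} (-1)^k·H_{k-1}(-(2a+2))·C(n,k)/(k^{2b+2}·C(n+k,k)), where H_{k-1}(-(2a+2)) = ∑_{j=1}^{k-1} (-1)^j/j^{2a+2}. -/

import Mathlib

open Finset

/-- Sign factor for an alternating multiple harmonic sum entry. -/
def aSgn (s : ℤ) : ℚ := if 0 < s then 1 else -1

/-- Alternating multiple harmonic sum `H_n(s₁,…,s_ℓ)` (strict indices). -/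
def Hh : ℕ → List ℤ → ℚ
  | _, [] => 1
  | n, s :: r => ∑ k ∈ Finset.Icc 1 n, aSgn s ^ k / (k : ℚ) ^ s.natAbs * Hh (k - 1) r

/-- Alternating multiple harmonic star sum `H*_n(s₁,…,s_ℓ)` (weak indices). -/
def Hstar : ℕ → List ℤ → ℚ
  | _, [] => 1
  | n, s :: r => ∑ k ∈ Finset.Icc 1 n, aSgn s ^ k / (k : ℚ) ^ s.natAbs * Hstar k r

/-- All compositions (ordered tuples of positive integers) of `w`. -/
def comps : ℕ → List (List ℕ)
  | 0 => [[]]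
  | (w+1) => (List.range (w+1)).flatMap (fun j => (comps (w - j)).map (fun l => (j+1) :: l))
decreasing_by simp_wf <;> omega

/-- Coerce a list of naturals to a list of integers. -/
def natList (l : List ℕ) : List ℤ := l.map (fun m => (m : ℤ))


/-! The ratio `binomRatio n k = C(n,k) / C(n+k,k)` satisfies
`binomRatio (n+1) k - binomRatio n k = k² · binomRatio (n+1) k / (n+1)²`, so
`∑_{m=k}^n binomRatio m k / m²` telescopes to `binomRatio n k / k²`. Hence if
`H*_m(r) = ∑ₖ c k · binomRatio m k` for all `m`, prepending a `2` to `r` just divides `c k` by `k²`.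
The recursion starts from `H_n(1) = 2 ∑ₖ binomRatio n k / k`, which gives `H*_n({2}^a, 1)`.
Prepending the `3` divides by `k³`, but `∑_{m=k}^n binomRatio m k / m³` also leaves an alternating
tail `∑_{j>k} (-1)^j binomRatio n j / j²`; exchanging the order of summation turns these tails
into the alternating harmonic sums `H_{k-1}(-(2a+2))`. The leading `{2}^b` then divides by `k^{2b}`. -/

lemma sum_Ioc_eq_sub_of_succ {M : Type*} [AddCommGroup M] {f g : ℕ → M} {k n : ℕ}
    (hkn : k ≤ n) (h : ∀ j ∈ Ico k n, g (j + 1) = f (j + 1) - f j) :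
    ∑ j ∈ Ioc k n, g j = f n - f k := by
  induction n, hkn using Nat.le_induction with
  | base => simp
  | succ n hkn ih =>
    rw [sum_Ioc_succ_top hkn, ih fun j hj => h j (Ico_subset_Ico_right n.le_succ hj),
      h n (mem_Ico.2 ⟨hkn, n.lt_succ_self⟩)]
    abel

open scoped Nat

def binomRatio (n k : ℕ) : ℚ := (n.choose k : ℚ) / ((n + k).choose k)

lemma binomRatio_of_lt {n k : ℕ} (h : n < k) : binomRatio n k = 0 := by
  simp [binomRatio, Nat.choose_eq_zero_of_lt h]

lemma binomRatio_zero_right (n : ℕ) : binomRatio n 0 = 1 := by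
  simp [binomRatio]

lemma binomRatio_eq_factorial {n k : ℕ} (h : k ≤ n) :
    binomRatio n k = (n ! : ℚ) ^ 2 / ((n - k)! * (n + k)!) := by
  rw [binomRatio, Nat.cast_choose ℚ h, Nat.cast_choose ℚ (Nat.le_add_left k n), Nat.add_sub_cancel]
  field_simp

lemma binomRatio_succ_left (n k : ℕ) :
    (((n : ℚ) + 1) ^ 2 - k ^ 2) * binomRatio (n + 1) k = ((n : ℚ) + 1) ^ 2 * binomRatio n k := by
  rcases lt_trichotomy k (n + 1) with h | rfl | h
  · rw [binomRatio_eq_factorial h.le, binomRatio_eq_factorial (Nat.le_of_lt_succ h),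
      Nat.succ_sub (Nat.le_of_lt_succ h), show n + 1 + k = n + k + 1 by ring]
    simp only [Nat.factorial_succ]
    have : (n : ℚ) - k + 1 ≠ 0 := by
      rw [sub_add_eq_add_sub, sub_ne_zero]; exact_mod_cast h.ne'
    push_cast [Nat.cast_sub (Nat.le_of_lt_succ h)]
    field_simp
    ring
  · rw [binomRatio_of_lt (Nat.lt_succ_self n)]; push_cast; ring
  · rw [binomRatio_of_lt h, binomRatio_of_lt (by omega)]; ring

lemma binomRatio_succ_left_sub (n k : ℕ) :
    binomRatio (n + 1) k - binomRatio n k = k ^ 2 * binomRatio (n + 1) k / ((n : ℚ) + 1) ^ 2 := by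
  field_simp
  linear_combination binomRatio_succ_left n k

lemma binomRatio_succ_right (n k : ℕ) :
    ((n : ℚ) + k + 1) * binomRatio n (k + 1) = ((n : ℚ) - k) * binomRatio n k := by
  rcases lt_trichotomy k n with h | rfl | h
  · rw [binomRatio_eq_factorial h, binomRatio_eq_factorial h.le,
      show n - k = n - (k + 1) + 1 by omega, show n + (k + 1) = n + k + 1 by ring]
    simp only [Nat.factorial_succ]
    have : (n : ℚ) - (k + 1) + 1 ≠ 0 := by
      rw [sub_add_eq_add_sub, sub_ne_zero]; exact_mod_cast (by omega : n + 1 ≠ k + 1)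
    push_cast [Nat.cast_sub h]
    field_simp
    ring
  · rw [binomRatio_of_lt (Nat.lt_succ_self k)]; ring
  · rw [binomRatio_of_lt h, binomRatio_of_lt (by omega)]; ring

lemma two_mul_sum_Ioc_mul_binomRatio {n k : ℕ} (hkn : k ≤ n) :
    2 * ∑ j ∈ Ioc k n, (j : ℚ) * binomRatio n j = (n - k) * binomRatio n k := by
  rw [mul_sum, sum_Ioc_eq_sub_of_succ (f := fun j => -((n : ℚ) - j) * binomRatio n j) hkn]
  · ring
  · intro j _
    push_cast
    linear_combination binomRatio_succ_right n j

lemma sum_Ioc_neg_one_pow_mul_binomRatio {n k : ℕ} (hkn : k ≤ n) :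
    2 * n * ∑ j ∈ Ioc k n, (-1 : ℚ) ^ j * binomRatio n j = (-1) ^ k * (k - n) * binomRatio n k := by
  rw [mul_sum, sum_Ioc_eq_sub_of_succ (f := fun j => -(-1 : ℚ) ^ j * (j - n) * binomRatio n j) hkn]
  · ring
  · intro j _
    push_cast
    linear_combination -(-1 : ℚ) ^ j * binomRatio_succ_right n j

lemma sum_Ioc_mul_binomRatio_succ_sub {n k : ℕ} (hkn : k ≤ n) (w : ℕ → ℚ) :
    ∑ i ∈ Ioc k (n + 1), w i * binomRatio (n + 1) i - ∑ i ∈ Ioc k n, w i * binomRatio n i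
      = (∑ i ∈ Ioc k (n + 1), w i * i ^ 2 * binomRatio (n + 1) i) / ((n : ℚ) + 1) ^ 2 := by
  have hext : ∑ i ∈ Ioc k n, w i * binomRatio n i = ∑ i ∈ Ioc k (n + 1), w i * binomRatio n i := by
    rw [sum_Ioc_succ_top hkn, binomRatio_of_lt n.lt_succ_self, mul_zero, add_zero]
  rw [hext, ← sum_sub_distrib, sum_div]
  refine sum_congr rfl fun i _ => ?_
  rw [← mul_sub, binomRatio_succ_left_sub]
  ring

lemma sum_Icc_one_div_eq_sum_binomRatio (m : ℕ) :
    ∑ j ∈ Icc 1 m, 1 / (j : ℚ) = ∑ k ∈ Icc 1 m, 2 / (k : ℚ) * binomRatio m k := by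
  have hIcc : ∀ n, Icc 1 n = Ioc 0 n := Finset.Icc_add_one_left_eq_Ioc 0
  simp only [hIcc]
  rw [sum_Ioc_eq_sub_of_succ (f := fun m => ∑ k ∈ Ioc 0 m, 2 / (k : ℚ) * binomRatio m k) m.zero_le]
  · simp
  · intro j _
    have hsum := two_mul_sum_Ioc_mul_binomRatio (n := j + 1) j.succ.zero_le
    rw [binomRatio_zero_right] at hsum
    have hterm : ∀ i ∈ Ioc 0 (j + 1),
        2 / (i : ℚ) * i ^ 2 * binomRatio (j + 1) i = 2 * (i * binomRatio (j + 1) i) := by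
      intro i hi
      have : (i : ℚ) ≠ 0 := by have := (mem_Ioc.1 hi).1; positivity
      field_simp
    rw [sum_Ioc_mul_binomRatio_succ_sub j.zero_le, sum_congr rfl hterm, ← mul_sum, hsum]
    push_cast
    field_simp
    ring

lemma sum_Icc_binomRatio_div_sq {n k : ℕ} (hk : 1 ≤ k) (hkn : k ≤ n) :
    ∑ m ∈ Icc k n, binomRatio m k / (m : ℚ) ^ 2 = binomRatio n k / (k : ℚ) ^ 2 := by
  have hk0 : (k : ℚ) ≠ 0 := by positivity
  rw [← add_sum_Ioc_eq_sum_Icc hkn,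
    sum_Ioc_eq_sub_of_succ (f := fun m => binomRatio m k / (k : ℚ) ^ 2) hkn]
  · ring
  · intro j _
    rw [← sub_div, binomRatio_succ_left_sub]
    push_cast
    field_simp

lemma sum_Icc_binomRatio_div_cube {n k : ℕ} (hk : 1 ≤ k) (hkn : k ≤ n) :
    ∑ m ∈ Icc k n, binomRatio m k / (m : ℚ) ^ 3
      = binomRatio n k / (k : ℚ) ^ 3
        + 2 * (-1) ^ k / k * ∑ j ∈ Ioc k n, (-1) ^ j / (j : ℚ) ^ 2 * binomRatio n j := by
  have hk0 : (k : ℚ) ≠ 0 := by positivity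
  rw [← add_sum_Ioc_eq_sum_Icc hkn, sum_Ioc_eq_sub_of_succ hkn
    (f := fun m => binomRatio m k / (k : ℚ) ^ 3
      + 2 * (-1) ^ k / k * ∑ j ∈ Ioc k m, (-1) ^ j / (j : ℚ) ^ 2 * binomRatio m j)]
  · simp only [Ioc_self, sum_empty]
    ring
  · intro j hj
    have hkj := (mem_Ico.1 hj).1
    have hsq : ((-1 : ℚ) ^ k) ^ 2 = 1 := by rw [← pow_mul, pow_mul', neg_one_sq, one_pow]
    have hterm : ∀ i ∈ Ioc k (j + 1), (-1) ^ i / (i : ℚ) ^ 2 * i ^ 2 * binomRatio (j + 1) i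
        = (-1) ^ i * binomRatio (j + 1) i := by
      intro i hi
      have : (i : ℚ) ≠ 0 := Nat.cast_ne_zero.2 (by have := (mem_Ioc.1 hi).1; omega)
      field_simp
    have htail := sum_Ioc_neg_one_pow_mul_binomRatio (n := j + 1) (k := k) (by omega)
    rw [add_sub_add_comm, ← mul_sub, sum_Ioc_mul_binomRatio_succ_sub hkj, sum_congr rfl hterm,
      ← sub_div, binomRatio_succ_left_sub]
    push_cast at htail ⊢
    field_simp
    linear_combination (-(-1 : ℚ) ^ k) * htail - ((k : ℚ) - j - 1) * binomRatio (j + 1) k * hsq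

lemma sum_Icc_sum_Icc_comm (n : ℕ) (f : ℕ → ℕ → ℚ) :
    ∑ i ∈ Icc 1 n, ∑ k ∈ Icc 1 i, f i k = ∑ k ∈ Icc 1 n, ∑ i ∈ Icc k n, f i k :=
  sum_comm' fun _ _ => by simp only [mem_Icc]; omega

lemma sum_div_sq_sum_mul_binomRatio (n : ℕ) (c : ℕ → ℚ) :
    ∑ i ∈ Icc 1 n, (∑ k ∈ Icc 1 i, c k * binomRatio i k) / (i : ℚ) ^ 2
      = ∑ k ∈ Icc 1 n, c k / (k : ℚ) ^ 2 * binomRatio n k := by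
  simp only [sum_div, mul_div_assoc]
  rw [sum_Icc_sum_Icc_comm]
  refine sum_congr rfl fun k hk => ?_
  obtain ⟨hk, hkn⟩ := mem_Icc.1 hk
  rw [← mul_sum, sum_Icc_binomRatio_div_sq hk hkn]
  ring

lemma sum_div_cube_sum_mul_binomRatio (n : ℕ) (c : ℕ → ℚ) :
    ∑ i ∈ Icc 1 n, (∑ k ∈ Icc 1 i, c k * binomRatio i k) / (i : ℚ) ^ 3
      = ∑ k ∈ Icc 1 n, (c k / (k : ℚ) ^ 3
          + 2 * (-1) ^ k / (k : ℚ) ^ 2 * ∑ j ∈ Icc 1 (k - 1), (-1) ^ j * c j / j)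
          * binomRatio n k := by
  simp only [sum_div, mul_div_assoc]
  rw [sum_Icc_sum_Icc_comm]
  have hcube : ∀ k ∈ Icc 1 n, ∑ i ∈ Icc k n, c k * (binomRatio i k / (i : ℚ) ^ 3)
      = c k / (k : ℚ) ^ 3 * binomRatio n k
        + ∑ j ∈ Ioc k n, 2 * (-1) ^ k * c k / k * ((-1) ^ j / (j : ℚ) ^ 2 * binomRatio n j) := by
    intro k hk
    obtain ⟨hk, hkn⟩ := mem_Icc.1 hk
    rw [← mul_sum, sum_Icc_binomRatio_div_cube hk hkn, ← mul_sum]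
    ring
  rw [sum_congr rfl hcube, sum_add_distrib,
    sum_comm' (t' := Icc 1 n) (s' := fun j => Icc 1 (j - 1))
      (fun _ _ => by simp only [mem_Icc, mem_Ioc]; omega),
    ← sum_add_distrib]
  refine sum_congr rfl fun k _ => ?_
  rw [add_mul, mul_sum, sum_mul]
  congr 1
  exact sum_congr rfl fun j _ => by ring

lemma Hstar_singleton_one (n : ℕ) : Hstar n [1] = ∑ k ∈ Icc 1 n, 1 / (k : ℚ) := by
  simp [Hstar, aSgn]

lemma Hstar_cons_two (n : ℕ) (r : List ℤ) :
    Hstar n (2 :: r) = ∑ k ∈ Icc 1 n, Hstar k r / (k : ℚ) ^ 2 := by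
  simp [Hstar, aSgn, inv_mul_eq_div]

lemma Hstar_cons_three (n : ℕ) (r : List ℤ) :
    Hstar n (3 :: r) = ∑ k ∈ Icc 1 n, Hstar k r / (k : ℚ) ^ 3 := by
  simp [Hstar, aSgn, inv_mul_eq_div]

lemma Hh_singleton_neg (n s : ℕ) :
    Hh n [-(s : ℤ)] = ∑ j ∈ Icc 1 n, (-1 : ℚ) ^ j / (j : ℚ) ^ s := by
  have hs : ¬ (s : ℤ) < 0 := by omega
  simp [Hh, aSgn, hs]

lemma Hstar_replicate_two_append {r : List ℤ} {c : ℕ → ℚ}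
    (hr : ∀ m, Hstar m r = ∑ k ∈ Icc 1 m, c k * binomRatio m k) (b n : ℕ) :
    Hstar n (List.replicate b 2 ++ r)
      = ∑ k ∈ Icc 1 n, c k / (k : ℚ) ^ (2 * b) * binomRatio n k := by
  induction b generalizing n with
  | zero => simp [hr]
  | succ b ih =>
    rw [List.replicate_succ, List.cons_append, Hstar_cons_two, sum_congr rfl fun m _ => by rw [ih],
      sum_div_sq_sum_mul_binomRatio]
    exact sum_congr rfl fun k _ => by ring

theorem stmt10_general (n a b : ℕ) :
    Hstar n (List.replicate b 2 ++ [3] ++ List.replicate a 2 ++ [1])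
      = 2 * ∑ k ∈ Finset.Icc 1 n,
            (n.choose k : ℚ) / ((k : ℚ) ^ (2*(a+b)+4) * ((n+k).choose k))
        + 4 * ∑ k ∈ Finset.Icc 1 n,
            (-1 : ℚ) ^ k * Hh (k-1) [-(2 * (a : ℤ) + 2)] * (n.choose k)
              / ((k : ℚ) ^ (2*b+2) * ((n+k).choose k)) := by
  have hTwosOne := Hstar_replicate_two_append (r := [1]) (fun m => by
    rw [Hstar_singleton_one, sum_Icc_one_div_eq_sum_binomRatio]) a
  have hFull := Hstar_replicate_two_append (r := 3 :: (List.replicate a 2 ++ [1]))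
    (fun m => by rw [Hstar_cons_three, sum_congr rfl fun i _ => by rw [hTwosOne],
      sum_div_cube_sum_mul_binomRatio]) b
  rw [show List.replicate b (2 : ℤ) ++ [3] ++ List.replicate a 2 ++ [1]
      = List.replicate b 2 ++ 3 :: (List.replicate a 2 ++ [1]) by simp,
    hFull, mul_sum, mul_sum, ← sum_add_distrib]
  refine sum_congr rfl fun k _ => ?_
  have hHh : Hh (k - 1) [-(2 * (a : ℤ) + 2)]
      = ∑ j ∈ Icc 1 (k - 1), (-1 : ℚ) ^ j / (j : ℚ) ^ (2 * a + 2) := by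
    rw [← Hh_singleton_neg]; push_cast; rfl
  have hinner : ∑ j ∈ Icc 1 (k - 1), (-1 : ℚ) ^ j * (2 / j / (j : ℚ) ^ (2 * a)) / j
      = 2 * ∑ j ∈ Icc 1 (k - 1), (-1 : ℚ) ^ j / (j : ℚ) ^ (2 * a + 2) := by
    rw [mul_sum]
    exact sum_congr rfl fun j _ => by ring
  rw [hHh, hinner, binomRatio]
  ring

theorem stmt10 (n a b : ℕ) (hn : 1 ≤ n) :
    Hstar n (List.replicate b 2 ++ [3] ++ List.replicate a 2 ++ [1])
      = 2 * ∑ k ∈ Finset.Icc 1 n,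
            (n.choose k : ℚ) / ((k : ℚ) ^ (2*(a+b)+4) * ((n+k).choose k))
        + 4 * ∑ k ∈ Finset.Icc 1 n,
            (-1 : ℚ) ^ k * Hh (k-1) [-(2 * (a : ℤ) + 2)] * (n.choose k)
              / ((k : ℚ) ^ (2*b+2) * ((n+k).choose k)) :=
  stmt10_general n a b
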